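/- There exist eight nonzero complex numbers $v_{+++}, v_{++-}, v_{+-+}, v_{+--}, v_{-++}, v_{-+-}, v_{--+}, v_{---}$ and an arbitrarily small $\theta > 0$ such that the angle between any two of them whose index strings differ in exactly one position is at most $\theta$, the denominator $D = \sum$ of all eight is nonzero, and yet $\left| \mathrm{Im} \frac{v_{+++} - v_{++-} - v_{+-+} - v_{-++} + v_{+--} + v_{-+-} + v_{--+} - v_{---}}{D} \right| > \tan(\theta/2)$. -/

import Mathlib

/-!
Take `v_{+++} = e^{2iθ}`, `v_{---} = 1` and the six other vertices equal to `ε e^{iθ}`.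
Adjacent vertices make angle at most `θ`, since `+++` and `---` are not adjacent. The six
middle vertices cancel in the signed sum, so the quotient is
`(e^{2iθ} - 1) / (1 + 6ε e^{iθ} + e^{2iθ}) = i sin θ / (cos θ + 3ε)`, and this beats
`tan (θ/2) = sin θ / (1 + cos θ)` as soon as `3ε < 1`.
-/

noncomputable def cangle (u v : ℂ) : ℝ :=
  Real.arccos ((u * (starRingEnd ℂ) v).re / (‖u‖ * ‖v‖))

open Complex Finset

lemma Real.tan_half_eq_sin_div_one_add_cos (x : ℝ) :
    Real.tan (x / 2) = Real.sin x / (1 + Real.cos x) := by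
  have hsin : Real.sin x = 2 * Real.sin (x / 2) * Real.cos (x / 2) := by
    rw [← Real.sin_two_mul, mul_div_cancel₀ _ two_ne_zero]
  have hcos : 1 + Real.cos x = 2 * Real.cos (x / 2) ^ 2 := by
    rw [Real.cos_sq, mul_div_cancel₀ _ two_ne_zero]; ring
  rw [Real.tan_eq_sin_div_cos, hsin, hcos]
  rcases eq_or_ne (Real.cos (x / 2)) 0 with h | h
  · simp [h]
  · field_simp

lemma Real.tan_half_lt_sin_div_cos_add {x c : ℝ} (hsin : 0 < Real.sin x)
    (hpos : 0 < Real.cos x + c) (hc : c < 1) :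
    Real.tan (x / 2) < Real.sin x / (Real.cos x + c) := by
  rw [Real.tan_half_eq_sin_div_one_add_cos]
  exact div_lt_div_of_pos_left hsin hpos (by linarith)

lemma cangle_ofReal_mul {r r' : ℝ} (hr : 0 < r) (hr' : 0 < r') (u v : ℂ) :
    cangle (r * u) (r' * v) = cangle u v := by
  have hre : ((r : ℂ) * u * (starRingEnd ℂ) (r' * v)).re
      = r * r' * (u * (starRingEnd ℂ) v).re := by
    rw [map_mul, conj_ofReal, ← re_ofReal_mul]
    push_cast
    ring_nf
  unfold cangle
  rw [hre, norm_mul, norm_mul, norm_real, norm_real, Real.norm_of_nonneg hr.le,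
    Real.norm_of_nonneg hr'.le]
  rcases eq_or_ne (‖u‖ * ‖v‖) 0 with h | h
  · simp [mul_mul_mul_comm, h]
  · field_simp

lemma cangle_exp_mul_I (a b : ℝ) :
    cangle (exp (a * I)) (exp (b * I)) = Real.arccos (Real.cos (a - b)) := by
  rw [cangle, ← exp_conj, map_mul, conj_ofReal, conj_I, ← exp_add, norm_exp_ofReal_mul_I,
    norm_exp_ofReal_mul_I, mul_one, div_one,
    show (a : ℂ) * I + b * -I = (a - b : ℝ) * I by push_cast; ring, exp_ofReal_mul_I_re]

lemma cangle_ofReal_mul_exp_mul_I {r r' : ℝ} (hr : 0 < r) (hr' : 0 < r') {a b : ℝ}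
    (hab : |a - b| ≤ Real.pi) :
    cangle (r * exp (a * I)) (r' * exp (b * I)) = |a - b| := by
  rw [cangle_ofReal_mul hr hr', cangle_exp_mul_I, ← Real.cos_abs,
    Real.arccos_cos (abs_nonneg _) hab]

/-- With `true` encoding `+`, the vertex `s` will get the phase `cubeLevel s * θ`. -/
def cubeLevel (s : Fin 3 → Bool) : ℕ := if s = ⊤ then 2 else if s = ⊥ then 0 else 1

lemma cubeLevel_le_add_one_of_adjacent : ∀ s t : Fin 3 → Bool,
    (univ.filter (fun i => s i ≠ t i)).card = 1 → cubeLevel s ≤ cubeLevel t + 1 := by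
  unfold cubeLevel; decide

section Sums

variable {R : Type*} [CommRing R]

lemma sum_intCast_mul_comp_cubeLevel (a : (Fin 3 → Bool) → ℤ) (g : ℕ → R) :
    ∑ s, (a s : R) * g (cubeLevel s)
      = ∑ n ∈ range 3, ((∑ s with cubeLevel s = n, a s : ℤ) : R) * g n := by
  rw [← sum_fiberwise_of_maps_to (g := cubeLevel) (t := range 3) (fun s _ => by
    unfold cubeLevel; split_ifs <;> simp)]
  refine sum_congr rfl fun n _ => ?_
  rw [Int.cast_sum, sum_mul]
  exact sum_congr rfl fun s hs => by rw [(mem_filter.1 hs).2]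

lemma sum_comp_cubeLevel (g : ℕ → R) : ∑ s, g (cubeLevel s) = g 0 + 6 * g 1 + g 2 := by
  have h0 : ∑ s : Fin 3 → Bool with cubeLevel s = 0, (1 : ℤ) = 1 := by
    unfold cubeLevel; decide
  have h1 : ∑ s : Fin 3 → Bool with cubeLevel s = 1, (1 : ℤ) = 6 := by
    unfold cubeLevel; decide
  have h2 : ∑ s : Fin 3 → Bool with cubeLevel s = 2, (1 : ℤ) = 1 := by
    unfold cubeLevel; decide
  calc ∑ s, g (cubeLevel s) = ∑ s, ((1 : ℤ) : R) * g (cubeLevel s) := by simp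
    _ = g 0 + 6 * g 1 + g 2 := by
      rw [sum_intCast_mul_comp_cubeLevel, sum_range_succ, sum_range_succ, sum_range_one, h0, h1,
        h2]
      push_cast; ring

lemma sum_neg_one_pow_mul_comp_cubeLevel (g : ℕ → R) :
    ∑ s : Fin 3 → Bool, (-1 : R) ^ (univ.filter (fun i => s i = false)).card * g (cubeLevel s)
      = g 2 - g 0 := by
  have h0 : ∑ s : Fin 3 → Bool with cubeLevel s = 0, (-1 : ℤ) ^ #{i | s i = false} = -1 := by
    unfold cubeLevel; decide
  have h1 : ∑ s : Fin 3 → Bool with cubeLevel s = 1, (-1 : ℤ) ^ #{i | s i = false} = 0 := by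
    unfold cubeLevel; decide
  have h2 : ∑ s : Fin 3 → Bool with cubeLevel s = 2, (-1 : ℤ) ^ #{i | s i = false} = 1 := by
    unfold cubeLevel; decide
  calc _ = ∑ s : Fin 3 → Bool, (((-1) ^ #{i | s i = false} : ℤ) : R) * g (cubeLevel s) := by
        simp
    _ = g 2 - g 0 := by
      rw [sum_intCast_mul_comp_cubeLevel, sum_range_succ, sum_range_succ, sum_range_one, h0, h1,
        h2]
      push_cast; ring

end Sums

section LevelVec

variable {θ ε : ℝ}

def levelRadius (ε : ℝ) (n : ℕ) : ℝ := if n = 1 then ε else 1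

lemma levelRadius_pos (hε : 0 < ε) (n : ℕ) : 0 < levelRadius ε n := by
  unfold levelRadius; split_ifs <;> positivity

noncomputable def levelVec (θ ε : ℝ) (n : ℕ) : ℂ :=
  levelRadius ε n * exp ((n * θ : ℝ) * I)

lemma levelVec_eq (n : ℕ) :
    levelVec θ ε n = levelRadius ε n * exp (θ * I) ^ n := by
  rw [levelVec, ← exp_nat_mul]; push_cast; ring_nf

lemma levelVec_ne_zero (hε : 0 < ε) (n : ℕ) : levelVec θ ε n ≠ 0 :=
  mul_ne_zero (ofReal_ne_zero.2 (levelRadius_pos hε n).ne') (exp_ne_zero _)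

lemma cangle_levelVec_cubeLevel_le (hθ : 0 ≤ θ) (hθπ : θ ≤ Real.pi) (hε : 0 < ε)
    {s t : Fin 3 → Bool} (hst : (univ.filter (fun i => s i ≠ t i)).card = 1) :
    cangle (levelVec θ ε (cubeLevel s)) (levelVec θ ε (cubeLevel t)) ≤ θ := by
  have hts : (univ.filter (fun i => t i ≠ s i)).card = 1 := by simpa only [ne_comm] using hst
  have hst' := cubeLevel_le_add_one_of_adjacent s t hst
  have hts' := cubeLevel_le_add_one_of_adjacent t s hts
  have hlevel : |(cubeLevel s : ℝ) - cubeLevel t| ≤ 1 :=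
    abs_sub_le_iff.2 ⟨sub_le_iff_le_add'.2 (by exact_mod_cast hst'),
      sub_le_iff_le_add'.2 (by exact_mod_cast hts')⟩
  have hphase : |cubeLevel s * θ - cubeLevel t * θ| ≤ θ := by
    rw [← sub_mul, abs_mul, abs_of_nonneg hθ]
    exact mul_le_of_le_one_left hθ hlevel
  unfold levelVec
  rw [cangle_ofReal_mul_exp_mul_I (levelRadius_pos hε _) (levelRadius_pos hε _)
    (hphase.trans hθπ)]
  exact hphase

lemma levelVec_sum_eq :
    levelVec θ ε 0 + 6 * levelVec θ ε 1 + levelVec θ ε 2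
      = 2 * (Real.cos θ + 3 * ε : ℝ) * exp (θ * I) := by
  have hcos := two_cos θ
  have hinv : exp (-θ * I) * exp (θ * I) = 1 := by rw [← exp_add]; simp
  simp only [levelVec_eq, levelRadius]
  push_cast
  linear_combination (-exp (θ * I)) * hcos - hinv

lemma levelVec_two_sub_zero :
    levelVec θ ε 2 - levelVec θ ε 0 = 2 * Real.sin θ * I * exp (θ * I) := by
  have hsin := two_sin θ
  have hinv : exp (-θ * I) * exp (θ * I) = 1 := by rw [← exp_add]; simp
  simp only [levelVec_eq, levelRadius]
  push_cast
  linear_combination (-I * exp (θ * I)) * hsin + hinv +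
    (exp (θ * I) ^ 2 - exp (θ * I) * exp (-θ * I)) * I_sq

lemma levelVec_sum_ne_zero (h : Real.cos θ + 3 * ε ≠ 0) :
    levelVec θ ε 0 + 6 * levelVec θ ε 1 + levelVec θ ε 2 ≠ 0 := by
  rw [levelVec_sum_eq]
  exact mul_ne_zero (mul_ne_zero two_ne_zero (ofReal_ne_zero.2 h)) (exp_ne_zero _)

lemma im_levelVec_div (h : Real.cos θ + 3 * ε ≠ 0) :
    ((levelVec θ ε 2 - levelVec θ ε 0) /
        (levelVec θ ε 0 + 6 * levelVec θ ε 1 + levelVec θ ε 2)).im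
      = Real.sin θ / (Real.cos θ + 3 * ε) := by
  have hD := levelVec_sum_ne_zero h
  rw [levelVec_sum_eq] at hD
  rw [levelVec_two_sub_zero, levelVec_sum_eq,
    div_eq_of_eq_mul hD (c := ((Real.sin θ / (Real.cos θ + 3 * ε) : ℝ) : ℂ) * I)]
  · rw [mul_I_im, ofReal_re]
  · have h' : ((Real.cos θ + 3 * ε : ℝ) : ℂ) ≠ 0 := ofReal_ne_zero.2 h
    rw [ofReal_div]
    field_simp

end LevelVec

open Finset in
theorem stmt17 (θ₀ : ℝ) (hθ₀ : 0 < θ₀) :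
    ∃ (θ : ℝ) (v : (Fin 3 → Bool) → ℂ), 0 < θ ∧ θ < θ₀ ∧
      (∀ s, v s ≠ 0) ∧
      (∀ s t : Fin 3 → Bool,
        (univ.filter (fun i => s i ≠ t i)).card = 1 → cangle (v s) (v t) ≤ θ) ∧
      (∑ s, v s) ≠ 0 ∧
      |((∑ s : Fin 3 → Bool,
            (-1 : ℂ) ^ (univ.filter (fun i => s i = false)).card * v s) /
          ∑ s, v s).im| > Real.tan (θ / 2) := by
  set θ := min (θ₀ / 2) 1
  have hθ : 0 < θ := lt_min (half_pos hθ₀) one_pos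
  have hθθ₀ : θ < θ₀ := (min_le_left _ _).trans_lt (half_lt_self hθ₀)
  have hθπ : θ ≤ Real.pi / 2 := (min_le_right _ _).trans (by linarith [Real.pi_gt_three])
  have hε : (0 : ℝ) < 1 / 4 := by norm_num
  have hpos : 0 < Real.cos θ + 3 * (1 / 4) := by
    linarith [Real.cos_nonneg_of_neg_pi_div_two_le_of_le (by linarith) hθπ]
  refine ⟨θ, fun s => levelVec θ (1 / 4) (cubeLevel s), hθ, hθθ₀,
    fun s => levelVec_ne_zero hε _,
    fun s t hst => cangle_levelVec_cubeLevel_le hθ.le (by linarith [Real.pi_pos]) hε hst,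
    ?_, ?_⟩
  · rw [sum_comp_cubeLevel (levelVec θ (1 / 4))]
    exact levelVec_sum_ne_zero hpos.ne'
  · rw [sum_neg_one_pow_mul_comp_cubeLevel (levelVec θ (1 / 4)),
      sum_comp_cubeLevel (levelVec θ (1 / 4)), im_levelVec_div hpos.ne']
    refine lt_of_lt_of_le ?_ (le_abs_self _)
    exact Real.tan_half_lt_sin_div_cos_add (Real.sin_pos_of_pos_of_lt_pi hθ (by linarith))
      hpos (by norm_num)
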